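/- arXiv:2305.08638 — 2 statements merged into one kernel-verified Lean document; each statement's English description precedes it below -/
import Mathlib

section
/- (Product formula with both endpoints bad) Let P, Q, R, S be real polynomials with P,Q not both zero and R,S not both zero, and a < b. If both a and b are bad numbers for P,Q,R,S, then Ind_a^b(PR − QS, PS + QR) = Ind_a^b(P,Q) + Ind_a^b(R,S). -/
open Polynomial

noncomputable def pPart (P : ℝ[X]) (x : ℝ) : ℝ[X] :=
  P /ₘ (X - C x) ^ P.rootMultiplicity x

noncomputable def pval (P Q : ℝ[X]) (x : ℝ) : ℤ :=
  (P.rootMultiplicity x : ℤ) - (Q.rootMultiplicity x : ℤ)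

noncomputable def SignAt (P Q : ℝ[X]) (x : ℝ) : ℝ :=
  if P ≠ 0 ∧ Q ≠ 0 ∧ pval P Q x = 0 then
    Real.sign ((pPart P x).eval x * (pPart Q x).eval x)
  else 0

noncomputable def Var (P Q : ℝ[X]) (a b : ℝ) : ℝ :=
  -(1/2) * SignAt P Q a + (1/2) * SignAt P Q b

noncomputable def IndPlus (P Q : ℝ[X]) (x : ℝ) : ℝ :=
  if P ≠ 0 ∧ Q ≠ 0 ∧ pval P Q x < 0 then
    (1/2) * Real.sign ((pPart P x).eval x * (pPart Q x).eval x)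
  else 0

noncomputable def IndMinus (P Q : ℝ[X]) (x : ℝ) : ℝ :=
  if P ≠ 0 ∧ Q ≠ 0 ∧ pval P Q x < 0 then
    (1/2) * (-1 : ℝ) ^ (pval P Q x) * Real.sign ((pPart P x).eval x * (pPart Q x).eval x)
  else 0

noncomputable def IndAt (P Q : ℝ[X]) (x : ℝ) : ℝ := IndPlus P Q x - IndMinus P Q x

noncomputable def IndSeg (P Q : ℝ[X]) (a b : ℝ) : ℝ :=
  IndPlus P Q a + (∑ᶠ x ∈ Set.Ioo a b, IndAt P Q x) - IndMinus P Q b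

noncomputable def Ind (P Q : ℝ[X]) (a b : ℝ) : ℝ :=
  if a < b then IndSeg P Q a b else if b < a then -IndSeg P Q b a else 0

def BadNumber (P Q R S : ℝ[X]) (c : ℝ) : Prop :=
  P ≠ 0 ∧ Q ≠ 0 ∧ R ≠ 0 ∧ S ≠ 0 ∧ P * S + Q * R ≠ 0 ∧
    pval P Q c = pval R S c ∧ pval P Q c < 0 ∧ pval (P * S + Q * R) (Q * S) c = 0

/-!
Reduce both pairs by their gcd, which changes no Cauchy index, so that `P + iQ` and `R + iS`
never vanish on `ℝ`. Such a curve has a continuous argument `θ`, and on every interval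
`Ind_a^b(P, Q) = halfIndex (θ b) - halfIndex (θ a)`: between consecutive roots of `Q` the angle
stays in one strip `(kπ, (k+1)π)`, and the one-sided contributions at the ends of the strip are
exactly what `halfIndex` records. The product curve `(PR - QS) + i(PS + QR) = (P + iQ)(R + iS)`
has argument `θ₁ + θ₂`. At a bad endpoint `Q` vanishes, so `θ₁` lies in `πℤ` there, where
`halfIndex (θ₁ + θ₂) = halfIndex θ₁ + halfIndex θ₂`.
-/

open Set Filter Topology
open scoped Real

theorem Real.sign_mul (x y : ℝ) : Real.sign (x * y) = Real.sign x * Real.sign y := by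
  rcases lt_trichotomy x 0 with hx | hx | hx <;> rcases lt_trichotomy y 0 with hy | hy | hy <;>
    simp [Real.sign_of_pos, Real.sign_of_neg, hx, hy, mul_pos_of_neg_of_neg,
      mul_neg_of_pos_of_neg, mul_neg_of_neg_of_pos]

theorem Real.eventually_sign_eq {f : ℝ → ℝ} {c : ℝ} (hf : ContinuousAt f c) (hc : f c ≠ 0) :
    ∀ᶠ t in 𝓝 c, Real.sign (f t) = Real.sign (f c) := by
  rcases hc.lt_or_gt with hc | hc
  · filter_upwards [hf.eventually (gt_mem_nhds hc)] with t ht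
    rw [Real.sign_of_neg ht, Real.sign_of_neg hc]
  · filter_upwards [hf.eventually (lt_mem_nhds hc)] with t ht
    rw [Real.sign_of_pos ht, Real.sign_of_pos hc]

theorem Real.sign_neg_one_zpow (k : ℤ) : Real.sign ((-1) ^ k) = (-1) ^ k := by
  rcases Int.even_or_odd k with h | h <;> simp [h.neg_one_zpow, Real.sign_neg, Real.sign_one]

theorem Real.sign_sin_of_mem_Ioo {k : ℤ} {θ : ℝ} (h : θ ∈ Ioo (k * π) ((k + 1) * π)) :
    Real.sign (Real.sin θ) = (-1) ^ k := by
  have hpos : 0 < Real.sin (θ - k * π) :=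
    Real.sin_pos_of_pos_of_lt_pi (by linarith [h.1]) (by linarith [h.2])
  rw [← sub_add_cancel θ (k * π), Real.sin_add_int_mul_pi, Real.sign_mul, Real.sign_of_pos hpos,
    mul_one, Real.sign_neg_one_zpow]

theorem Set.OrdConnected.subset_Ioo {α : Type*} [LinearOrder α] {s : Set α} (hs : s.OrdConnected)
    {x l u : α} (hx : x ∈ s) (hxI : x ∈ Ioo l u) (hl : l ∉ s) (hu : u ∉ s) : s ⊆ Ioo l u := by
  intro y hy
  by_contra h
  rcases not_and_or.1 h with h | h
  · exact hl (hs.out hy hx ⟨not_lt.1 h, hxI.1.le⟩)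
  · exact hu (hs.out hx hy ⟨hxI.2.le, not_lt.1 h⟩)

theorem exists_mapsTo_Ioo_int_mul_pi {θ : ℝ → ℝ} (hθ : Continuous θ) {a b : ℝ} (hab : a < b)
    (hsin : ∀ t ∈ Ioo a b, Real.sin (θ t) ≠ 0) :
    ∃ k : ℤ, MapsTo θ (Ioo a b) (Ioo (k * π) ((k + 1) * π)) ∧
      MapsTo θ (Icc a b) (Icc (k * π) ((k + 1) * π)) := by
  obtain ⟨t₀, ht₀⟩ := nonempty_Ioo.2 hab
  set k := ⌊θ t₀ / π⌋
  have hk₁ : (k : ℝ) * π ≤ θ t₀ := (le_div_iff₀ Real.pi_pos).1 (Int.floor_le _)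
  have hk₂ : θ t₀ < (k + 1) * π := (div_lt_iff₀ Real.pi_pos).1 (Int.lt_floor_add_one _)
  have hnot : ∀ n : ℤ, (n : ℝ) * π ∉ θ '' Ioo a b := by
    rintro n ⟨t, ht, htn⟩
    exact hsin t ht (htn ▸ Real.sin_int_mul_pi n)
  have hIoo : θ '' Ioo a b ⊆ Ioo (k * π) ((k + 1) * π) :=
    (isPreconnected_Ioo.image θ hθ.continuousOn).ordConnected.subset_Ioo (mem_image_of_mem θ ht₀)
      ⟨hk₁.lt_of_ne fun h => hnot k (h ▸ mem_image_of_mem θ ht₀), hk₂⟩ (hnot k)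
      (by exact_mod_cast hnot (k + 1))
  refine ⟨k, mapsTo_iff_image_subset.2 hIoo, mapsTo_iff_image_subset.2 ?_⟩
  calc θ '' Icc a b = θ '' closure (Ioo a b) := by rw [closure_Ioo hab.ne]
    _ ⊆ closure (θ '' Ioo a b) := image_closure_subset_closure_image hθ
    _ ⊆ Icc (k * π) ((k + 1) * π) := closure_minimal (hIoo.trans Ioo_subset_Icc_self) isClosed_Icc

theorem Finset.card_filter_lt_card_filter {α : Type*} {s : Finset α} {p q : α → Prop}
    [DecidablePred p] [DecidablePred q] (hpq : ∀ x, p x → q x) {m : α} (hm : m ∈ s) (hqm : q m)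
    (hpm : ¬ p m) : (s.filter p).card < (s.filter q).card :=
  Finset.card_lt_card ⟨Finset.monotone_filter_right s fun x _ => hpq x,
    fun h => hpm (Finset.mem_filter.1 (h (Finset.mem_filter.2 ⟨hm, hqm⟩))).2⟩

open Complex in
/-- The argument is the imaginary part of a primitive of the logarithmic derivative `F' / F`. -/
theorem Complex.exists_continuous_arg {F : ℝ → ℂ} (hF : ContDiff ℝ 1 F) (hF0 : ∀ t, F t ≠ 0) :
    ∃ θ : ℝ → ℝ, Continuous θ ∧ ∀ t, F t = ‖F t‖ * exp (θ t * I) := by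
  set L : ℝ → ℂ := fun t => ∫ s in (0 : ℝ)..t, deriv F s / F s
  have hg : Continuous fun s => deriv F s / F s := hF.continuous_deriv_one.div hF.continuous hF0
  have hL : ∀ t, HasDerivAt L (deriv F t / F t) t := fun t =>
    (hg.integral_hasStrictDerivAt 0 t).hasDerivAt
  have hLc : Continuous L := continuous_iff_continuousAt.2 fun t => (hL t).continuousAt
  have hconst : ∀ t, F t * exp (-L t) = F 0 := by
    have hD : ∀ t, HasDerivAt (fun t => F t * exp (-L t)) 0 t := fun t => by
      have h := ((hF.differentiable one_ne_zero t).hasDerivAt).mul (hL t).neg.cexp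
      have h0 : deriv F t * exp (-L t) + F t * (exp (-L t) * -(deriv F t / F t)) = 0 := by
        field_simp [hF0 t]
        ring
      exact h0 ▸ h
    intro t
    simpa [L] using is_const_of_deriv_eq_zero (fun t => (hD t).differentiableAt)
      (fun t => (hD t).deriv) t 0
  have hFt : ∀ t, F t = F 0 * exp (L t) := fun t => by
    rw [← hconst t, mul_assoc, ← Complex.exp_add, neg_add_cancel, Complex.exp_zero, mul_one]
  refine ⟨fun t => arg (F 0) + (L t).im, continuous_const.add (continuous_im.comp hLc), fun t => ?_⟩
  rw [hFt t, norm_mul, norm_exp]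
  conv_lhs => rw [← norm_mul_exp_arg_mul_I (F 0), ← re_add_im (L t)]
  push_cast
  rw [exp_add, add_mul, exp_add]
  ring

theorem exists_eq_mul_isCoprime {R : Type*} [EuclideanDomain R] [GCDMonoid R] (p : R) {q : R}
    (hq : q ≠ 0) : ∃ g p' q' : R, g ≠ 0 ∧ p = g * p' ∧ q = g * q' ∧ IsCoprime p' q' :=
  ⟨gcd p q, p / gcd p q, q / gcd p q, gcd_ne_zero_of_right hq,
    (EuclideanDomain.mul_div_cancel' (gcd_ne_zero_of_right hq) (gcd_dvd_left p q)).symm,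
    (EuclideanDomain.mul_div_cancel' (gcd_ne_zero_of_right hq) (gcd_dvd_right p q)).symm,
    isCoprime_div_gcd_div_gcd hq⟩

theorem Polynomial.ne_zero_of_eval_ne_zero {R : Type*} [Semiring R] {p : R[X]} {x : R}
    (h : p.eval x ≠ 0) : p ≠ 0 :=
  fun hp => h (by simp [hp])

namespace CauchyIndex

theorem pPart_mul {U V : ℝ[X]} (hU : U ≠ 0) (hV : V ≠ 0) (x : ℝ) :
    pPart (U * V) x = pPart U x * pPart V x := by
  have key : (X - C x) ^ (U * V).rootMultiplicity x * (pPart U x * pPart V x) = U * V := by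
    rw [rootMultiplicity_mul (mul_ne_zero hU hV), pow_add]
    calc _ = ((X - C x) ^ U.rootMultiplicity x * pPart U x) *
          ((X - C x) ^ V.rootMultiplicity x * pPart V x) := by ring
      _ = U * V := by rw [pPart, pPart, pow_mul_divByMonic_rootMultiplicity_eq,
            pow_mul_divByMonic_rootMultiplicity_eq]
  calc pPart (U * V) x = (X - C x) ^ (U * V).rootMultiplicity x * (pPart U x * pPart V x) /ₘ
        (X - C x) ^ (U * V).rootMultiplicity x := by rw [key, pPart]
    _ = _ := mul_divByMonic_cancel_left _ ((monic_X_sub_C x).pow _)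

theorem pval_mul_left {D U V : ℝ[X]} (hD : D ≠ 0) (hU : U ≠ 0) (hV : V ≠ 0) (x : ℝ) :
    pval (D * U) (D * V) x = pval U V x := by
  simp only [pval, rootMultiplicity_mul (mul_ne_zero hD hU),
    rootMultiplicity_mul (mul_ne_zero hD hV)]
  push_cast
  ring

theorem sign_pPart_mul_left {D U V : ℝ[X]} (hD : D ≠ 0) (hU : U ≠ 0) (hV : V ≠ 0) (x : ℝ) :
    Real.sign ((pPart (D * U) x).eval x * (pPart (D * V) x).eval x) =
      Real.sign ((pPart U x).eval x * (pPart V x).eval x) := by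
  have hd : (pPart D x).eval x ≠ 0 := eval_divByMonic_pow_rootMultiplicity_ne_zero x hD
  rw [pPart_mul hD hU, pPart_mul hD hV, eval_mul, eval_mul,
    show ∀ d u v : ℝ, d * u * (d * v) = (d * d) * (u * v) by intros; ring, Real.sign_mul,
    Real.sign_of_pos (mul_self_pos.2 hd), one_mul]

variable {D : ℝ[X]}

theorem IndPlus_mul_left (hD : D ≠ 0) (U V : ℝ[X]) (x : ℝ) :
    IndPlus (D * U) (D * V) x = IndPlus U V x := by
  by_cases hUV : U ≠ 0 ∧ V ≠ 0
  · simp only [IndPlus, pval_mul_left hD hUV.1 hUV.2, sign_pPart_mul_left hD hUV.1 hUV.2, ne_eq,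
      mul_eq_zero, hD, false_or]
  · simp only [IndPlus, ne_eq, mul_eq_zero, hD, false_or]
    rw [if_neg (by tauto), if_neg (by tauto)]

theorem IndMinus_mul_left (hD : D ≠ 0) (U V : ℝ[X]) (x : ℝ) :
    IndMinus (D * U) (D * V) x = IndMinus U V x := by
  by_cases hUV : U ≠ 0 ∧ V ≠ 0
  · simp only [IndMinus, pval_mul_left hD hUV.1 hUV.2, sign_pPart_mul_left hD hUV.1 hUV.2, ne_eq,
      mul_eq_zero, hD, false_or]
  · simp only [IndMinus, ne_eq, mul_eq_zero, hD, false_or]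
    rw [if_neg (by tauto), if_neg (by tauto)]

theorem IndSeg_mul_left (hD : D ≠ 0) (U V : ℝ[X]) (a b : ℝ) :
    IndSeg (D * U) (D * V) a b = IndSeg U V a b := by
  simp only [IndSeg, IndAt, IndPlus_mul_left hD, IndMinus_mul_left hD]

variable {P Q : ℝ[X]} {c : ℝ}

theorem eval_eq_zero_of_pval_neg (h : pval P Q c < 0) : Q.eval c = 0 := by
  by_contra hQc
  simp only [pval, rootMultiplicity_eq_zero hQc, CharP.cast_eq_zero, sub_zero] at h
  omega

theorem IndPlus_eq_zero_of_eval_ne_zero (hQc : Q.eval c ≠ 0) : IndPlus P Q c = 0 :=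
  if_neg fun h => hQc (eval_eq_zero_of_pval_neg h.2.2)

theorem IndMinus_eq_zero_of_eval_ne_zero (hQc : Q.eval c ≠ 0) : IndMinus P Q c = 0 :=
  if_neg fun h => hQc (eval_eq_zero_of_pval_neg h.2.2)

theorem IndAt_eq_zero_of_eval_ne_zero (hQc : Q.eval c ≠ 0) : IndAt P Q c = 0 := by
  rw [IndAt, IndPlus_eq_zero_of_eval_ne_zero hQc, IndMinus_eq_zero_of_eval_ne_zero hQc, sub_zero]

theorem eval_eq_pow_mul_pPart (Q : ℝ[X]) (c t : ℝ) :
    Q.eval t = (t - c) ^ Q.rootMultiplicity c * (pPart Q c).eval t := by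
  conv_lhs => rw [← pow_mul_divByMonic_rootMultiplicity_eq Q c]
  simp [pPart]

theorem eventually_sign_eval_pPart (hQ : Q ≠ 0) (c : ℝ) :
    ∀ᶠ t in 𝓝 c, Real.sign ((pPart Q c).eval t) = Real.sign ((pPart Q c).eval c) :=
  Real.eventually_sign_eq (pPart Q c).continuousAt
    (eval_divByMonic_pow_rootMultiplicity_ne_zero c hQ)

theorem eventually_sign_eval_nhdsGT (hQ : Q ≠ 0) (c : ℝ) :
    ∀ᶠ t in 𝓝[>] c, Real.sign (Q.eval t) = Real.sign ((pPart Q c).eval c) := by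
  filter_upwards [nhdsWithin_le_nhds (eventually_sign_eval_pPart hQ c), self_mem_nhdsWithin]
    with t ht (hct : c < t)
  rw [eval_eq_pow_mul_pPart Q c, Real.sign_mul, Real.sign_of_pos (pow_pos (sub_pos.2 hct) _),
    one_mul, ht]

theorem eventually_sign_eval_nhdsLT (hQ : Q ≠ 0) (c : ℝ) :
    ∀ᶠ t in 𝓝[<] c, Real.sign (Q.eval t) =
      (-1) ^ Q.rootMultiplicity c * Real.sign ((pPart Q c).eval c) := by
  filter_upwards [nhdsWithin_le_nhds (eventually_sign_eval_pPart hQ c), self_mem_nhdsWithin]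
    with t ht (htc : t < c)
  rw [eval_eq_pow_mul_pPart Q c, Real.sign_mul, ht, show t - c = -(c - t) by ring, neg_pow,
    Real.sign_mul, Real.sign_of_pos (pow_pos (sub_pos.2 htc) _), mul_one]
  rcases neg_one_pow_eq_or ℝ (Q.rootMultiplicity c) with h | h <;>
    simp [h, Real.sign_neg, Real.sign_one]

theorem pPart_eq_self_of_eval_ne_zero (hPc : P.eval c ≠ 0) : pPart P c = P := by
  simp [pPart, rootMultiplicity_eq_zero hPc]

theorem pval_eq_neg_of_eval_ne_zero (hPc : P.eval c ≠ 0) :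
    pval P Q c = -(Q.rootMultiplicity c : ℤ) := by
  simp [pval, rootMultiplicity_eq_zero hPc]

theorem pval_neg_of_isRoot (hQ : Q ≠ 0) (hQc : Q.eval c = 0) (hPc : P.eval c ≠ 0) :
    pval P Q c < 0 := by
  rw [pval_eq_neg_of_eval_ne_zero hPc, neg_neg_iff_pos, Nat.cast_pos]
  exact rootMultiplicity_pos'.2 ⟨hQ, hQc⟩

theorem IndPlus_eq_ite (hQ : Q ≠ 0) (hPQ : Q.eval c = 0 → P.eval c ≠ 0) {ε : ℝ}
    (hε : ∀ᶠ t in 𝓝[>] c, Real.sign (Q.eval t) = ε) :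
    IndPlus P Q c = if Q.eval c = 0 then 1 / 2 * Real.sign (P.eval c) * ε else 0 := by
  split_ifs with hQc
  · have hPc := hPQ hQc
    obtain ⟨t, htε, htQ⟩ := (hε.and (eventually_sign_eval_nhdsGT hQ c)).exists
    rw [IndPlus, if_pos ⟨ne_zero_of_eval_ne_zero hPc, hQ, pval_neg_of_isRoot hQ hQc hPc⟩,
      pPart_eq_self_of_eval_ne_zero hPc, Real.sign_mul, ← htQ, htε, mul_assoc]
  · exact IndPlus_eq_zero_of_eval_ne_zero hQc

theorem IndMinus_eq_ite (hQ : Q ≠ 0) (hPQ : Q.eval c = 0 → P.eval c ≠ 0) {ε : ℝ}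
    (hε : ∀ᶠ t in 𝓝[<] c, Real.sign (Q.eval t) = ε) :
    IndMinus P Q c = if Q.eval c = 0 then 1 / 2 * Real.sign (P.eval c) * ε else 0 := by
  split_ifs with hQc
  · have hPc := hPQ hQc
    obtain ⟨t, htε, htQ⟩ := (hε.and (eventually_sign_eval_nhdsLT hQ c)).exists
    rw [IndMinus, if_pos ⟨ne_zero_of_eval_ne_zero hPc, hQ, pval_neg_of_isRoot hQ hQc hPc⟩,
      pPart_eq_self_of_eval_ne_zero hPc, Real.sign_mul, ← htε, htQ,
      pval_eq_neg_of_eval_ne_zero hPc, zpow_neg, zpow_natCast, ← inv_pow, inv_neg_one]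
    ring
  · exact IndMinus_eq_zero_of_eval_ne_zero hQc

theorem IndSeg_split (hQ : Q ≠ 0) {a m b : ℝ} (hm : m ∈ Ioo a b) :
    IndSeg P Q a b = IndSeg P Q a m + IndSeg P Q m b := by
  have hfin : ∀ s : Set ℝ, (s ∩ Function.support (IndAt P Q)).Finite := fun s =>
    ((finite_setOfPred_isRoot hQ).subset fun _ hx => by_contra fun h =>
      (Function.mem_support.1 hx) (IndAt_eq_zero_of_eval_ne_zero h)).inter_of_right s
  have hdisj : Disjoint (Ioo a m) (Ico m b) :=
    disjoint_left.2 fun _ h₁ h₂ => (h₁.2.trans_le h₂.1).false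
  rw [IndSeg, IndSeg, IndSeg, ← Ioo_union_Ico_eq_Ioo hm.1 hm.2.le,
    finsum_mem_union' hdisj (hfin _) (hfin _), ← Ioo_insert_left hm.2,
    finsum_mem_insert' _ (fun h => h.1.false) (hfin _), IndAt]
  ring

theorem finsum_IndAt_eq_zero {a b : ℝ} (h : ∀ x ∈ Ioo a b, Q.eval x ≠ 0) :
    ∑ᶠ x ∈ Ioo a b, IndAt P Q x = 0 :=
  finsum_mem_of_eqOn_zero fun x hx => IndAt_eq_zero_of_eval_ne_zero (h x hx)

/-- `θ / π` if this is an integer, and `⌊θ / π⌋ + 1 / 2` otherwise. -/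
noncomputable def halfIndex (θ : ℝ) : ℝ := (⌊θ / π⌋ + ⌈θ / π⌉) / 2

theorem halfIndex_int_mul_pi_add (n : ℤ) (θ : ℝ) : halfIndex (n * π + θ) = n + halfIndex θ := by
  have h : (n * π + θ) / π = θ / π + n := by field_simp; ring
  simp only [halfIndex, h, Int.floor_add_intCast, Int.ceil_add_intCast]
  push_cast
  ring

theorem halfIndex_int_mul_pi (n : ℤ) : halfIndex (n * π) = n := by
  simp [halfIndex]

theorem halfIndex_of_mem_Ioo {k : ℤ} {θ : ℝ} (h : θ ∈ Ioo (k * π) ((k + 1) * π)) :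
    halfIndex θ = k + 1 / 2 := by
  have hfloor : ⌊θ / π⌋ = k := Int.floor_eq_iff.2
    ⟨(le_div_iff₀ Real.pi_pos).2 h.1.le, (div_lt_iff₀ Real.pi_pos).2 h.2⟩
  have hceil : ⌈θ / π⌉ = k + 1 := Int.ceil_eq_iff.2 (by
    push_cast
    exact ⟨by rw [add_sub_cancel_right, lt_div_iff₀ Real.pi_pos]; exact h.1,
      (div_le_iff₀ Real.pi_pos).2 h.2.le⟩)
  rw [halfIndex, hfloor, hceil]
  push_cast
  ring

theorem halfIndex_of_mem_Icc {k : ℤ} {θ : ℝ} (h : θ ∈ Icc (k * π) ((k + 1) * π)) :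
    halfIndex θ = k + 1 / 2 -
      if Real.sin θ = 0 then 1 / 2 * Real.sign (Real.cos θ) * (-1) ^ k else 0 := by
  split_ifs with hsin
  · obtain ⟨n, rfl⟩ := Real.sin_eq_zero_iff.1 hsin
    have hkn : (k : ℝ) ≤ n ∧ (n : ℝ) ≤ k + 1 :=
      ⟨le_of_mul_le_mul_right h.1 Real.pi_pos, le_of_mul_le_mul_right h.2 Real.pi_pos⟩
    have hn : n = k ∨ n = k + 1 := by
      have : k ≤ n ∧ n ≤ k + 1 := by exact_mod_cast hkn
      omega
    have hsq : ((-1 : ℝ) ^ k) * (-1) ^ k = 1 := by rw [← mul_zpow]; norm_num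
    rcases hn with rfl | rfl
    · rw [halfIndex_int_mul_pi, Real.cos_int_mul_pi, Real.sign_neg_one_zpow, mul_assoc, hsq]
      ring
    · rw [halfIndex_int_mul_pi, Real.cos_int_mul_pi, Real.sign_neg_one_zpow,
        zpow_add_one₀ (by norm_num : (-1 : ℝ) ≠ 0)]
      push_cast
      linear_combination (-1 / 2 : ℝ) * hsq
  · refine (halfIndex_of_mem_Ioo ⟨h.1.lt_of_ne ?_, h.2.lt_of_ne ?_⟩).trans (sub_zero _).symm
    · rintro rfl; exact hsin (Real.sin_int_mul_pi k)
    · rintro rfl; exact hsin (by exact_mod_cast Real.sin_int_mul_pi (k + 1))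

structure IsArgLift (P Q : ℝ[X]) (θ : ℝ → ℝ) : Prop where
  continuous : Continuous θ
  polar : ∀ t, ∃ r > 0, P.eval t = r * Real.cos (θ t) ∧ Q.eval t = r * Real.sin (θ t)

namespace IsArgLift

variable {P Q : ℝ[X]} {θ : ℝ → ℝ}

theorem eval_right_eq_zero_iff (h : IsArgLift P Q θ) (t : ℝ) :
    Q.eval t = 0 ↔ Real.sin (θ t) = 0 := by
  obtain ⟨r, hr, -, hQ⟩ := h.polar t
  rw [hQ, mul_eq_zero, or_iff_right hr.ne']

theorem exists_int_mul_pi (h : IsArgLift P Q θ) {c : ℝ} (hQc : Q.eval c = 0) :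
    ∃ n : ℤ, θ c = n * π := by
  obtain ⟨n, hn⟩ := Real.sin_eq_zero_iff.1 ((h.eval_right_eq_zero_iff c).1 hQc)
  exact ⟨n, hn.symm⟩

theorem sign_eval_left (h : IsArgLift P Q θ) (t : ℝ) :
    Real.sign (P.eval t) = Real.sign (Real.cos (θ t)) := by
  obtain ⟨r, hr, hP, -⟩ := h.polar t
  rw [hP, Real.sign_mul, Real.sign_of_pos hr, one_mul]

theorem sign_eval_right (h : IsArgLift P Q θ) (t : ℝ) :
    Real.sign (Q.eval t) = Real.sign (Real.sin (θ t)) := by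
  obtain ⟨r, hr, -, hQ⟩ := h.polar t
  rw [hQ, Real.sign_mul, Real.sign_of_pos hr, one_mul]

theorem eval_left_ne_zero (h : IsArgLift P Q θ) {t : ℝ} (hQ : Q.eval t = 0) :
    P.eval t ≠ 0 := by
  obtain ⟨r, hr, hP, hQ'⟩ := h.polar t
  rw [hQ', mul_eq_zero, or_iff_right hr.ne'] at hQ
  rw [hP]
  exact mul_ne_zero hr.ne' fun hcos => by nlinarith [Real.sin_sq_add_cos_sq (θ t)]

theorem halfIndex_eq (h : IsArgLift P Q θ) {k : ℤ} {c : ℝ}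
    (hc : θ c ∈ Icc (k * π) ((k + 1) * π)) :
    halfIndex (θ c) = k + 1 / 2 -
      if Q.eval c = 0 then 1 / 2 * Real.sign (P.eval c) * (-1) ^ k else 0 := by
  simp only [halfIndex_of_mem_Icc hc, h.eval_right_eq_zero_iff, h.sign_eval_left]

theorem IndSeg_eq_of_forall_eval_ne_zero (h : IsArgLift P Q θ) (hQ : Q ≠ 0) {a b : ℝ} (hab : a < b)
    (hroots : ∀ t ∈ Ioo a b, Q.eval t ≠ 0) :
    IndSeg P Q a b = halfIndex (θ b) - halfIndex (θ a) := by
  obtain ⟨k, hIoo, hIcc⟩ := exists_mapsTo_Ioo_int_mul_pi h.continuous hab fun t ht =>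
    (h.eval_right_eq_zero_iff t).not.1 (hroots t ht)
  have hsign : ∀ t ∈ Ioo a b, Real.sign (Q.eval t) = (-1) ^ k := fun t ht => by
    rw [h.sign_eval_right, Real.sign_sin_of_mem_Ioo (hIoo ht)]
  rw [IndSeg, finsum_IndAt_eq_zero hroots,
    IndPlus_eq_ite hQ h.eval_left_ne_zero (eventually_of_mem (Ioo_mem_nhdsGT hab) hsign),
    IndMinus_eq_ite hQ h.eval_left_ne_zero (eventually_of_mem (Ioo_mem_nhdsLT hab) hsign),
    h.halfIndex_eq (hIcc (right_mem_Icc.2 hab.le)), h.halfIndex_eq (hIcc (left_mem_Icc.2 hab.le))]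
  ring

theorem IndSeg_eq (h : IsArgLift P Q θ) (hQ : Q ≠ 0) {a b : ℝ} (hab : a < b) :
    IndSeg P Q a b = halfIndex (θ b) - halfIndex (θ a) := by
  induction hn : (Q.roots.toFinset.filter (· ∈ Ioo a b)).card using Nat.strong_induction_on
    generalizing a b with
  | _ n ih =>
  by_cases hroot : ∃ m ∈ Ioo a b, Q.eval m = 0
  · obtain ⟨m, hm, hQm⟩ := hroot
    have hm' : m ∈ Q.roots.toFinset := Multiset.mem_toFinset.2 ((mem_roots hQ).2 hQm)
    have hleft := Finset.card_filter_lt_card_filter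
      (fun x (hx : x ∈ Ioo a m) => ⟨hx.1, hx.2.trans hm.2⟩) hm' hm fun h => h.2.false
    have hright := Finset.card_filter_lt_card_filter
      (fun x (hx : x ∈ Ioo m b) => ⟨hm.1.trans hx.1, hx.2⟩) hm' hm fun h => h.1.false
    rw [IndSeg_split hQ hm, ih _ (hn ▸ hleft) hm.1 rfl, ih _ (hn ▸ hright) hm.2 rfl]
    ring
  · exact h.IndSeg_eq_of_forall_eval_ne_zero hQ hab fun t ht hQt => hroot ⟨t, ht, hQt⟩

theorem mul {P Q R S : ℝ[X]} {θ₁ θ₂ : ℝ → ℝ} (h₁ : IsArgLift P Q θ₁)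
    (h₂ : IsArgLift R S θ₂) : IsArgLift (P * R - Q * S) (P * S + Q * R) (θ₁ + θ₂) where
  continuous := h₁.continuous.add h₂.continuous
  polar t := by
    obtain ⟨r₁, hr₁, hP, hQ⟩ := h₁.polar t
    obtain ⟨r₂, hr₂, hR, hS⟩ := h₂.polar t
    refine ⟨r₁ * r₂, mul_pos hr₁ hr₂, ?_, ?_⟩
    · simp only [eval_sub, eval_mul, hP, hQ, hR, hS, Pi.add_apply, Real.cos_add]
      ring
    · simp only [eval_add, eval_mul, hP, hQ, hR, hS, Pi.add_apply, Real.sin_add]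
      ring

theorem exists_of_isCoprime {P Q : ℝ[X]} (hPQ : IsCoprime P Q) :
    ∃ θ, IsArgLift P Q θ := by
  set F : ℝ → ℂ := fun t => ((P.eval t : ℝ) : ℂ) + ((Q.eval t : ℝ) : ℂ) * Complex.I
  have hpoly : ∀ U : ℝ[X], ContDiff ℝ 1 fun t => ((U.eval t : ℝ) : ℂ) := fun U =>
    Complex.ofRealCLM.contDiff.comp (by simpa using U.contDiff_aeval (𝕜 := ℝ) 1)
  have hF : ContDiff ℝ 1 F := (hpoly P).add ((hpoly Q).mul contDiff_const)
  have hF0 : ∀ t, F t ≠ 0 := fun t hFt => by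
    obtain ⟨u, v, huv⟩ := hPQ
    have hP : P.eval t = 0 := by simpa [F] using congrArg Complex.re hFt
    have hQ : Q.eval t = 0 := by simpa [F] using congrArg Complex.im hFt
    simpa [hP, hQ] using congrArg (eval t) huv
  obtain ⟨θ, hθ, hpolar⟩ := Complex.exists_continuous_arg hF hF0
  refine ⟨θ, hθ, fun t => ⟨‖F t‖, norm_pos_iff.2 (hF0 t), ?_, ?_⟩⟩
  · simpa [F, Complex.exp_mul_I, ← Complex.ofReal_cos, ← Complex.ofReal_sin]
      using congrArg Complex.re (hpolar t)
  · simpa [F, Complex.exp_mul_I, ← Complex.ofReal_cos, ← Complex.ofReal_sin]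
      using congrArg Complex.im (hpolar t)

end IsArgLift

end CauchyIndex

open CauchyIndex

theorem stmt15_general (P Q R S : ℝ[X])
    (a b : ℝ) (hab : a < b)
    (ha : BadNumber P Q R S a) (hb : BadNumber P Q R S b) :
    Ind (P * R - Q * S) (P * S + Q * R) a b =
      Ind P Q a b + Ind R S a b := by
  obtain ⟨hP, hQ, -, hS, hV, -, hpq_a, -⟩ := ha
  obtain ⟨-, -, -, -, -, -, hpq_b, -⟩ := hb
  obtain ⟨g₁, P', Q', hg₁, rfl, rfl, hPQ⟩ := exists_eq_mul_isCoprime P hQ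
  obtain ⟨g₂, R', S', hg₂, rfl, rfl, hRS⟩ := exists_eq_mul_isCoprime R hS
  obtain ⟨θ₁, h₁⟩ := IsArgLift.exists_of_isCoprime hPQ
  obtain ⟨θ₂, h₂⟩ := IsArgLift.exists_of_isCoprime hRS
  have hQ' : Q' ≠ 0 := right_ne_zero_of_mul hQ
  have hθ₁ : ∀ c, pval (g₁ * P') (g₁ * Q') c < 0 → ∃ n : ℤ, θ₁ c = n * π := fun c hc =>
    h₁.exists_int_mul_pi <| eval_eq_zero_of_pval_neg <| by
      rwa [pval_mul_left hg₁ (right_ne_zero_of_mul hP) hQ'] at hc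
  have hU : g₁ * P' * (g₂ * R') - g₁ * Q' * (g₂ * S') = g₁ * g₂ * (P' * R' - Q' * S') := by ring
  have hV' : g₁ * P' * (g₂ * S') + g₁ * Q' * (g₂ * R') = g₁ * g₂ * (P' * S' + Q' * R') := by ring
  obtain ⟨m, hm⟩ := hθ₁ a hpq_a
  obtain ⟨n, hn⟩ := hθ₁ b hpq_b
  simp only [Ind, if_pos hab]
  rw [hU, hV', IndSeg_mul_left (mul_ne_zero hg₁ hg₂), IndSeg_mul_left hg₁, IndSeg_mul_left hg₂,
    (h₁.mul h₂).IndSeg_eq (right_ne_zero_of_mul (hV' ▸ hV)) hab, h₁.IndSeg_eq hQ' hab,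
    h₂.IndSeg_eq (right_ne_zero_of_mul hS) hab]
  simp only [Pi.add_apply, hm, hn, halfIndex_int_mul_pi_add, halfIndex_int_mul_pi]
  ring

theorem stmt15 (P Q R S : ℝ[X]) (hPQ : ¬ (P = 0 ∧ Q = 0)) (hRS : ¬ (R = 0 ∧ S = 0))
    (a b : ℝ) (hab : a < b)
    (ha : BadNumber P Q R S a) (hb : BadNumber P Q R S b) :
    Ind (P * R - Q * S) (P * S + Q * R) a b =
      Ind P Q a b + Ind R S a b :=
  stmt15_general P Q R S a b hab ha hb
end

section
/- Let Γ = [0,1]×[0,1] ⊂ ℝ², F(Z) = Z viewed as the polynomial X + iY in ℂ[X,Y], and γ = α + iβ ∈ ℂ with 0 < β < α. Then w(γ·F | ∂Γ) = 0 while w(F | ∂Γ) = 1/4 and w(γ | ∂Γ) = 0, so the winding number w is not additive with respect to multiplication. -/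
open Polynomial

open Polynomial

noncomputable def rePoly (p : ℂ[X]) : ℝ[X] :=
  ∑ n ∈ p.support, C (p.coeff n).re * X ^ n

noncomputable def imPoly (p : ℂ[X]) : ℝ[X] :=
  ∑ n ∈ p.support, C (p.coeff n).im * X ^ n

noncomputable def conjP (p : ℂ[X]) : ℂ[X] := p.map (starRingEnd ℂ)

noncomputable def restrictH (F : ℂ[X]) (y : ℝ) : ℂ[X] :=
  F.comp (X + C (Complex.I * (y : ℂ)))

noncomputable def restrictV (F : ℂ[X]) (x : ℝ) : ℂ[X] :=
  F.comp (C (x : ℂ) + C Complex.I * X)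

noncomputable def restrictHc (G : ℂ[X]) (y : ℝ) : ℂ[X] := conjP (restrictH G y)

noncomputable def restrictVc (G : ℂ[X]) (x : ℝ) : ℂ[X] := conjP (restrictV G x)

noncomputable def lineInd (p : ℂ[X]) (a b : ℝ) : ℝ := Ind (rePoly p) (imPoly p) a b

noncomputable def wind (F G : ℂ[X]) (x0 x1 y0 y1 : ℝ) : ℝ :=
  (1/2) * (lineInd (restrictH F y0 * restrictHc G y0) x0 x1
    + lineInd (restrictV F x1 * restrictVc G x1) y0 y1
    + lineInd (restrictH F y1 * restrictHc G y1) x1 x0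
    + lineInd (restrictV F x0 * restrictVc G x0) y1 y0)

noncomputable def Wind (F G : ℂ[X]) (x0 x1 y0 y1 : ℝ) : ℝ :=
  (1/2) * (wind F G x0 x1 y0 y1 + wind (C Complex.I * F) G x0 x1 y0 y1)

/-! ### Auxiliary lemmas -/

lemma rePoly_coeff (p : ℂ[X]) (n : ℕ) : (rePoly p).coeff n = (p.coeff n).re := by
  rw [rePoly, finset_sum_coeff]
  simp only [coeff_C_mul, coeff_X_pow]
  rw [Finset.sum_eq_single n]
  · by_cases h : n ∈ p.support
    · simp
    · simp [Polynomial.notMem_support_iff.mp h]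
  · intro b _ hb; simp [hb, Ne.symm hb]
  · intro h; simp [Polynomial.notMem_support_iff.mp h]

lemma imPoly_coeff (p : ℂ[X]) (n : ℕ) : (imPoly p).coeff n = (p.coeff n).im := by
  rw [imPoly, finset_sum_coeff]
  simp only [coeff_C_mul, coeff_X_pow]
  rw [Finset.sum_eq_single n]
  · by_cases h : n ∈ p.support
    · simp
    · simp [Polynomial.notMem_support_iff.mp h]
  · intro b _ hb; simp [hb, Ne.symm hb]
  · intro h; simp [Polynomial.notMem_support_iff.mp h]

lemma rePoly_linear (a b : ℂ) :
    rePoly (C a + C b * X) = C a.re + C b.re * X := by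
  ext n
  rw [rePoly_coeff]
  simp only [coeff_add, coeff_C_mul, coeff_C, coeff_X]
  rcases n with _ | _ | n <;> simp

lemma imPoly_linear (a b : ℂ) :
    imPoly (C a + C b * X) = C a.im + C b.im * X := by
  ext n
  rw [imPoly_coeff]
  simp only [coeff_add, coeff_C_mul, coeff_C, coeff_X]
  rcases n with _ | _ | n <;> simp

lemma lineInd_linear (a b : ℂ) (s t : ℝ) :
    lineInd (C a + C b * X) s t = Ind (C a.re + C b.re * X) (C a.im + C b.im * X) s t := by
  rw [lineInd, rePoly_linear, imPoly_linear]

lemma IndSeg_zero (P Q : ℝ[X]) (a b : ℝ)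
    (h : ∀ x ∈ Set.Icc a b, ¬(P ≠ 0 ∧ Q ≠ 0 ∧ pval P Q x < 0)) (hab : a ≤ b) :
    IndSeg P Q a b = 0 := by
  have h1 : IndPlus P Q a = 0 := if_neg (h a ⟨le_refl a, hab⟩)
  have h2 : IndMinus P Q b = 0 := if_neg (h b ⟨hab, le_refl b⟩)
  have h3 : (∑ᶠ x ∈ Set.Ioo a b, IndAt P Q x) = 0 := by
    apply finsum_mem_of_eqOn_zero
    intro x hx
    have hc := h x ⟨le_of_lt hx.1, le_of_lt hx.2⟩
    simp only [IndAt, IndPlus, IndMinus, if_neg hc, Pi.zero_apply, sub_zero]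
  rw [IndSeg, h1, h2, h3]; ring

lemma Ind_zero (P Q : ℝ[X]) (a b : ℝ)
    (h : ∀ x ∈ Set.Icc (min a b) (max a b), ¬(P ≠ 0 ∧ Q ≠ 0 ∧ pval P Q x < 0)) :
    Ind P Q a b = 0 := by
  rw [Ind]
  split_ifs with h1 h2
  · rw [IndSeg_zero P Q a b _ (le_of_lt h1)]
    rwa [min_eq_left (le_of_lt h1), max_eq_right (le_of_lt h1)] at h
  · rw [IndSeg_zero P Q b a _ (le_of_lt h2), neg_zero]
    rwa [min_eq_right (le_of_lt h2), max_eq_left (le_of_lt h2)] at h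
  · rfl

lemma Ind_zero_of_eval_ne (P Q : ℝ[X]) (a b : ℝ)
    (h : ∀ x ∈ Set.Icc (min a b) (max a b), Q.eval x ≠ 0) :
    Ind P Q a b = 0 := by
  apply Ind_zero
  intro x hx hc
  have h0 : Q.rootMultiplicity x = 0 := rootMultiplicity_eq_zero (h x hx)
  have : 0 ≤ pval P Q x := by simp [pval, h0]
  omega

lemma Ind_zero_of_P_eq_zero (Q : ℝ[X]) (a b : ℝ) :
    Ind (0 : ℝ[X]) Q a b = 0 := by
  apply Ind_zero; intro x _ hc; exact hc.1 rfl

lemma Ind_zero_of_Q_eq_zero (P : ℝ[X]) (a b : ℝ) :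
    Ind P (0 : ℝ[X]) a b = 0 := by
  apply Ind_zero; intro x _ hc; exact hc.2.1 rfl

lemma Ind_CX_CX (u v : ℝ) (hu : u ≠ 0) (hv : v ≠ 0) (a b : ℝ) :
    Ind (C u * X) (C v * X) a b = 0 := by
  apply Ind_zero
  intro x _ hc
  have e : ∀ w : ℝ, w ≠ 0 → (C w * X : ℝ[X]).rootMultiplicity x = X.rootMultiplicity x := by
    intro w hw
    rw [rootMultiplicity_mul (by simp [hw, X_ne_zero] : (C w * X : ℝ[X]) ≠ 0)]
    rw [rootMultiplicity_eq_zero (by simp [hw] : ¬IsRoot (C w) x), zero_add]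
  have := hc.2.2
  rw [pval, e u hu, e v hv] at this
  omega

lemma Ind_one_X : Ind (1 : ℝ[X]) X 0 1 = 1/2 := by
  have hm1 : rootMultiplicity (0:ℝ) (1 : ℝ[X]) = 0 :=
    rootMultiplicity_eq_zero (by simp [IsRoot])
  have hmX : rootMultiplicity (0:ℝ) (X : ℝ[X]) = 1 := by
    have h : rootMultiplicity (0:ℝ) (X - C 0) = 1 := rootMultiplicity_X_sub_C_self
    simpa using h
  have hXdiv : (X : ℝ[X]) /ₘ X = 1 := by
    nth_rewrite 1 [← mul_one (X : ℝ[X])]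
    exact mul_divByMonic_cancel_left (1:ℝ[X]) monic_X
  have hp1 : pPart (1 : ℝ[X]) 0 = 1 := by
    rw [pPart, hm1, pow_zero, divByMonic_one]
  have hpX : pPart (X : ℝ[X]) 0 = 1 := by
    rw [pPart, hmX, pow_one]
    simpa using hXdiv
  have hpval : pval (1 : ℝ[X]) X 0 = -1 := by
    rw [pval, hm1, hmX]; norm_num
  have h1 : IndPlus (1 : ℝ[X]) X 0 = 1/2 := by
    rw [IndPlus, if_pos ⟨one_ne_zero, X_ne_zero, by rw [hpval]; norm_num⟩]
    rw [hp1, hpX]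
    simp [Real.sign_one]
  have h2 : IndMinus (1 : ℝ[X]) X 1 = 0 := by
    have : pval (1 : ℝ[X]) X 1 = 0 := by
      rw [pval, rootMultiplicity_eq_zero (by simp [IsRoot] : ¬IsRoot (1:ℝ[X]) 1),
        rootMultiplicity_eq_zero (by simp [IsRoot] : ¬IsRoot (X:ℝ[X]) 1)]
      norm_num
    exact if_neg (by rw [this]; intro hc; exact absurd hc.2.2 (by norm_num))
  have h3 : (∑ᶠ x ∈ Set.Ioo (0:ℝ) 1, IndAt (1 : ℝ[X]) X x) = 0 := by
    apply finsum_mem_of_eqOn_zero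
    intro x hx
    have hpv : pval (1 : ℝ[X]) X x = 0 := by
      rw [pval, rootMultiplicity_eq_zero (by simp [IsRoot] : ¬IsRoot (1:ℝ[X]) x),
        rootMultiplicity_eq_zero (by simp [IsRoot, ne_of_gt hx.1] : ¬IsRoot (X:ℝ[X]) x)]
      norm_num
    have hc : ¬((1:ℝ[X]) ≠ 0 ∧ (X:ℝ[X]) ≠ 0 ∧ pval (1:ℝ[X]) X x < 0) := by
      rw [hpv]; intro hc; exact absurd hc.2.2 (by norm_num)
    simp only [IndAt, IndPlus, IndMinus, if_neg hc, Pi.zero_apply, sub_zero]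
  rw [Ind, if_pos (by norm_num : (0:ℝ) < 1), IndSeg, h1, h2, h3]
  ring

lemma restrictHc_one (y : ℝ) : restrictHc 1 y = 1 := by
  simp [restrictHc, restrictH, conjP]

lemma restrictVc_one (x : ℝ) : restrictVc 1 x = 1 := by
  simp [restrictVc, restrictV, conjP]

theorem stmt16 (α β : ℝ) (h0 : 0 < β) (hβα : β < α) :
    wind (C ((α : ℂ) + (β : ℂ) * Complex.I) * X) 1 0 1 0 1 = 0 ∧
    wind (X : ℂ[X]) 1 0 1 0 1 = 1/4 ∧
    wind (C ((α : ℂ) + (β : ℂ) * Complex.I)) 1 0 1 0 1 = 0 := by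
  have hα : 0 < α := h0.trans hβα
  set γ : ℂ := (α : ℂ) + (β : ℂ) * Complex.I with hγ
  have hγre : γ.re = α := by simp [hγ]
  have hγim : γ.im = β := by simp [hγ]
  have hγIre : (γ * Complex.I).re = -β := by simp [Complex.mul_re, hγre, hγim]
  have hγIim : (γ * Complex.I).im = α := by simp [Complex.mul_im, hγre, hγim]
  refine ⟨?_, ?_, ?_⟩
  · -- wind (C γ * X) 1 0 1 0 1 = 0
    rw [wind, restrictHc_one, restrictHc_one, restrictVc_one, restrictVc_one]
    simp only [mul_one]
    rw [show restrictH (C γ * X) 0 = C 0 + C γ * X by simp [restrictH],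
        show restrictV (C γ * X) 1 = C γ + C (γ * Complex.I) * X by
          simp [restrictV, C_mul]; ring,
        show restrictH (C γ * X) 1 = C (γ * Complex.I) + C γ * X by
          simp [restrictH, C_mul]; ring,
        show restrictV (C γ * X) 0 = C 0 + C (γ * Complex.I) * X by
          simp [restrictV, C_mul]; ring]
    rw [lineInd_linear, lineInd_linear, lineInd_linear, lineInd_linear]
    simp only [hγre, hγim, hγIre, hγIim, Complex.zero_re, Complex.zero_im, map_zero,
      zero_add]
    rw [Ind_CX_CX α β (ne_of_gt hα) (ne_of_gt h0),
        Ind_CX_CX (-β) α (by linarith) (ne_of_gt hα),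
        Ind_zero_of_eval_ne _ _ 0 1 (by
          intro x hx
          simp only [min_def, max_def] at hx
          norm_num at hx
          simp only [eval_add, eval_mul, eval_C, eval_X]
          nlinarith [hx.1]),
        Ind_zero_of_eval_ne _ _ 1 0 (by
          intro x hx
          simp only [min_def, max_def] at hx
          norm_num at hx
          simp only [eval_add, eval_mul, eval_C, eval_X]
          nlinarith [hx.1])]
    ring
  · -- wind X 1 0 1 0 1 = 1/4
    rw [wind, restrictHc_one, restrictHc_one, restrictVc_one, restrictVc_one]
    simp only [mul_one]
    rw [show restrictH (X : ℂ[X]) 0 = C 0 + C 1 * X by simp [restrictH],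
        show restrictV (X : ℂ[X]) 1 = C 1 + C Complex.I * X by simp [restrictV],
        show restrictH (X : ℂ[X]) 1 = C Complex.I + C 1 * X by simp [restrictH]; ring,
        show restrictV (X : ℂ[X]) 0 = C 0 + C Complex.I * X by simp [restrictV]]
    rw [lineInd_linear, lineInd_linear, lineInd_linear, lineInd_linear]
    simp only [Complex.zero_re, Complex.zero_im, Complex.one_re, Complex.one_im,
      Complex.I_re, Complex.I_im, map_zero, map_one, zero_add, zero_mul, add_zero,
      one_mul, mul_zero]
    rw [Ind_zero_of_Q_eq_zero, Ind_zero_of_P_eq_zero, Ind_one_X,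
        Ind_zero_of_eval_ne _ _ 1 0 (by
          intro x hx
          simp only [eval_one]
          norm_num)]
    ring
  · -- wind (C γ) 1 0 1 0 1 = 0
    rw [wind, restrictHc_one, restrictHc_one, restrictVc_one, restrictVc_one]
    simp only [mul_one]
    rw [show restrictH (C γ) 0 = C γ + C 0 * X by simp [restrictH],
        show restrictV (C γ) 1 = C γ + C 0 * X by simp [restrictV],
        show restrictH (C γ) 1 = C γ + C 0 * X by simp [restrictH],
        show restrictV (C γ) 0 = C γ + C 0 * X by simp [restrictV]]
    rw [lineInd_linear]; rw [lineInd_linear]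
    simp only [hγre, hγim, Complex.zero_re, Complex.zero_im, map_zero, zero_mul, add_zero]
    rw [Ind_zero_of_eval_ne _ _ 0 1 (by intro x _; simp [ne_of_gt h0]),
        Ind_zero_of_eval_ne _ _ 1 0 (by intro x _; simp [ne_of_gt h0])]
    ring
end
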